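/- Let p be an odd rational prime, K a finite separable extension of F = 𝔽_p(t), O_K the integral closure of 𝔽_p[t] in K, S a finite set of places of K containing all the infinite places, S_fin its set of finite places, S_∞ its set of infinite places, and h_K the ideal class number of O_K. Then there is a constant C₁ ≥ 0 such that for every non-zero x ∈ O_{K,S} there exist non-zero a ∈ O_{K,S} and non-zero b ∈ O_K with x = a/b, ord_𝔭(a) ≥ −h_K for every 𝔭 ∈ S_fin, and ord_𝔮(b) ≤ C₁ for every 𝔮 ∈ S_∞; moreover, for every 𝔭 ∈ S_fin, if ord_𝔭(a) > 0 then ord_𝔭(b) = 0. -/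

import Mathlib

/-!
Let `h = h_K`. Each `𝔭 ^ h` is principal, say `(π_𝔭)`, and a polynomial `q ∈ 𝔽_p[t]` of positive
degree prime to every `𝔭 ∈ S_fin` has negative order at every infinite place. Hence
`τ_𝔭 = π_𝔭 q ^ N` with `N` large lies in `O_K`, has `ord_𝔭 τ_𝔭 = h`, is a unit at the other
places of `S_fin`, and has order `≤ 0` at every infinite place. For `x ∈ O_{K,S}` take
`b = ∏ τ_𝔭 ^ k_𝔭` with `k_𝔭 = ⌊-ord_𝔭 x / h⌋⁺` and `a = x b`: this lifts each `ord_𝔭 x` into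
`(-h, 0]` when it is negative and leaves it alone otherwise, so `C₁ = 0` works.
-/

open FirstOrder Language IsDedekindDomain Polynomial

set_option linter.unusedSectionVars false

namespace Paper

section HolomorphyRings

variable {R : Type*} [CommRing R] [IsDedekindDomain R]
variable {K : Type*} [Field K] [Algebra R K] [IsFractionRing R K]

/-- The subring of elements of `K` that are integral at every prime satisfying `P`. -/
def integralAt (P : HeightOneSpectrum R → Prop) : Subring K where
  carrier := {x : K | ∀ v : HeightOneSpectrum R, P v → v.valuation K x ≤ 1}
  zero_mem' := fun v _ => by simp only [Valuation.map_zero]; exact zero_le_one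
  one_mem' := fun v _ => le_of_eq (Valuation.map_one _)
  add_mem' := fun {x y} hx hy v hv =>
    le_trans (Valuation.map_add _ x y) (max_le (hx v hv) (hy v hv))
  mul_mem' := fun {x y} hx hy v hv => by
    rw [Valuation.map_mul]; exact mul_le_one' (hx v hv) (hy v hv)
  neg_mem' := fun {x} hx v hv => by rw [Valuation.map_neg]; exact hx v hv

theorem mem_integralAt {P : HeightOneSpectrum R → Prop} {x : K} :
    x ∈ (integralAt P : Subring K) ↔
      ∀ v : HeightOneSpectrum R, P v → v.valuation K x ≤ 1 :=
  Iff.rfl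

theorem algebraMap_mem_integralAt (P : HeightOneSpectrum R → Prop) (r : R) :
    algebraMap R K r ∈ (integralAt P : Subring K) :=
  fun v _ => v.valuation_le_one r

/-- The normalized additive `v`-adic valuation of an element of `K`, as an integer
(with junk value `0` at `x = 0`). -/
noncomputable def ordAt (v : HeightOneSpectrum R) (x : K) : ℤ :=
  if h : v.valuation K x = 0 then 0 else - Multiplicative.toAdd (WithZero.unzero h)

end HolomorphyRings

section Dedekind

open WithZero

variable {R : Type*} [CommRing R] [IsDedekindDomain R]
variable {K : Type*} [Field K] [Algebra R K] [IsFractionRing R K]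

theorem ordAt_eq_neg_log (v : HeightOneSpectrum R) (x : K) :
    ordAt v x = -log (v.valuation K x) := by
  unfold ordAt
  split_ifs with hx
  · simp [hx]
  · rw [toAdd_unzero_eq_log]

theorem ordAt_mul (v : HeightOneSpectrum R) {x y : K} (hx : x ≠ 0) (hy : y ≠ 0) :
    ordAt v (x * y) = ordAt v x + ordAt v y := by
  rw [ordAt_eq_neg_log, ordAt_eq_neg_log, ordAt_eq_neg_log, map_mul,
    log_mul ((v.valuation K).ne_zero_iff.mpr hx) ((v.valuation K).ne_zero_iff.mpr hy), neg_add]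

theorem ordAt_pow (v : HeightOneSpectrum R) (x : K) (n : ℕ) :
    ordAt v (x ^ n) = n * ordAt v x := by
  simp [ordAt_eq_neg_log]

theorem ordAt_prod {ι : Type*} (v : HeightOneSpectrum R) (s : Finset ι) {f : ι → K}
    (hf : ∀ i ∈ s, f i ≠ 0) :
    ordAt v (∏ i ∈ s, f i) = ∑ i ∈ s, ordAt v (f i) := by
  classical
  induction s using Finset.induction_on with
  | empty => simp [ordAt_eq_neg_log]
  | insert a s ha ih =>
    rw [Finset.prod_insert ha, Finset.sum_insert ha,
      ordAt_mul v (hf a (s.mem_insert_self a))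
        (Finset.prod_ne_zero_iff.mpr fun i hi => hf i (Finset.mem_insert_of_mem hi)),
      ih fun i hi => hf i (Finset.mem_insert_of_mem hi)]

theorem ordAt_algebraMap_of_notMem (v : HeightOneSpectrum R) {r : R} (hr : r ∉ v.asIdeal) :
    ordAt v (algebraMap R K r) = 0 := by
  rw [ordAt_eq_neg_log, (v.valuation_eq_one_iff_notMem (K := K)).mpr hr, log_one, neg_zero]

theorem ne_zero_of_span_eq_pow {v : HeightOneSpectrum R} {π : R} {n : ℕ}
    (hπ : Ideal.span {π} = v.asIdeal ^ n) : π ≠ 0 := by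
  rintro rfl
  rw [Ideal.span_singleton_eq_bot.mpr rfl] at hπ
  exact pow_ne_zero n v.ne_bot hπ.symm

theorem ordAt_algebraMap_of_span_eq_pow (v : HeightOneSpectrum R) {π : R} {n : ℕ}
    (hπ : Ideal.span {π} = v.asIdeal ^ n) :
    ordAt v (algebraMap R K π) = n := by
  rw [ordAt_eq_neg_log, v.valuation_of_algebraMap,
    v.intValuation_eq_exp_neg_multiplicity (ne_zero_of_span_eq_pow hπ),
    log_exp, neg_neg, hπ, multiplicity_pow_self_of_prime v.prime]

theorem notMem_of_span_eq_pow {v w : HeightOneSpectrum R} (hvw : v ≠ w) {π : R} {n : ℕ}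
    (hπ : Ideal.span {π} = w.asIdeal ^ n) : π ∉ v.asIdeal := by
  intro hπv
  have hwv : w.asIdeal ^ n ≤ v.asIdeal := by rwa [← hπ, Ideal.span_singleton_le_iff_mem]
  exact hvw (HeightOneSpectrum.ext
    ((Ring.DimensionLeOne.prime_le_prime_iff_eq w.ne_bot).mp (Ideal.IsPrime.le_of_pow_le hwv)).symm)

theorem ordAt_prod_pow {S : Finset (HeightOneSpectrum R)} {τ : HeightOneSpectrum R → R} {n : ℕ}
    (hτ0 : ∀ w ∈ S, τ w ≠ 0) (hself : ∀ w ∈ S, ordAt w (algebraMap R K (τ w)) = n)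
    (hother : ∀ w ∈ S, ∀ v ∈ S, v ≠ w → ordAt v (algebraMap R K (τ w)) = 0)
    (k : HeightOneSpectrum R → ℕ) {v : HeightOneSpectrum R} (hv : v ∈ S) :
    ordAt v (algebraMap R K (∏ w ∈ S, τ w ^ k w)) = k v * n := by
  have hτK0 : ∀ w ∈ S, algebraMap R K (τ w ^ k w) ≠ 0 := fun w hw =>
    (map_ne_zero_iff _ (IsFractionRing.injective R K)).mpr (pow_ne_zero _ (hτ0 w hw))
  rw [map_prod, ordAt_prod v S hτK0, Finset.sum_eq_single_of_mem v hv]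
  · rw [map_pow, ordAt_pow, hself v hv]
  · intro w hw hwv
    rw [map_pow, ordAt_pow, hother w hw v hv (Ne.symm hwv), mul_zero]

theorem exists_span_singleton_eq_pow_card_classGroup (v : HeightOneSpectrum R) :
    ∃ π : R, Ideal.span {π} = v.asIdeal ^ Nat.card (ClassGroup R) := by
  have hv : v.asIdeal ∈ nonZeroDivisors (Ideal R) := mem_nonZeroDivisors_of_ne_zero v.ne_bot
  have hvh := pow_mem hv (Nat.card (ClassGroup R))
  have hone : ClassGroup.mk0 ⟨_, hvh⟩ = 1 := by
    rw [show (⟨_, hvh⟩ : nonZeroDivisors (Ideal R)) = ⟨_, hv⟩ ^ Nat.card (ClassGroup R) from rfl,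
      map_pow, pow_card_eq_one']
  obtain ⟨π, hπ⟩ := ((ClassGroup.mk0_eq_one_iff hvh).mp hone).principal
  exact ⟨π, hπ.symm⟩

end Dedekind

theorem exists_nat_neg_le_add_mul_and_eq_zero_of_pos (n : ℤ) {h : ℕ} (hh : 0 < h) :
    ∃ k : ℕ, -(h : ℤ) ≤ n + k * h ∧ (0 < n + k * h → k = 0) := by
  rcases le_or_gt 0 n with hn | hn
  · exact ⟨0, by omega, fun _ => rfl⟩
  · refine ⟨n.natAbs / h, ?_⟩
    have hdiv : ((n.natAbs % h : ℕ) : ℤ) + h * (n.natAbs / h : ℕ) = -n := by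
      rw [← Int.ofNat_natAbs_of_nonpos hn.le]
      exact_mod_cast Nat.mod_add_div n.natAbs h
    have hmod : ((n.natAbs % h : ℕ) : ℤ) < h := by exact_mod_cast Nat.mod_lt n.natAbs hh
    constructor
    · linarith
    · intro hpos
      linarith [Int.natCast_nonneg (n.natAbs % h)]

theorem exists_natDegree_pos_forall_notMem {k : Type*} [Field k] {R : Type*} [CommRing R]
    [IsDedekindDomain R] [Algebra k[X] R] [Algebra.IsIntegral k[X] R]
    (S : Finset (HeightOneSpectrum R)) :
    ∃ q : k[X], 0 < q.natDegree ∧ ∀ v ∈ S, algebraMap k[X] R q ∉ v.asIdeal := by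
  have hbelow (v : HeightOneSpectrum R) :
      ∃ c : k[X], c ≠ 0 ∧ algebraMap k[X] R c ∈ v.asIdeal := by
    obtain ⟨y, hy, hy0⟩ := Submodule.exists_mem_ne_zero_of_ne_bot v.ne_bot
    obtain ⟨c, hc, hc0⟩ := Submodule.exists_mem_ne_zero_of_ne_bot
      (Ideal.comap_ne_bot_of_integral_mem hy0 hy (Algebra.IsIntegral.isIntegral (R := k[X]) y))
    exact ⟨c, hc0, hc⟩
  choose c hc0 hcv using hbelow
  have hC0 : ∏ v ∈ S, c v ≠ 0 := Finset.prod_ne_zero_iff.mpr fun v _ => hc0 v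
  refine ⟨(∏ v ∈ S, c v) * X + 1, ?_, fun v hv hqv => ?_⟩
  · rw [natDegree_add_eq_left_of_natDegree_lt] <;> simp [natDegree_mul_X hC0]
  · -- the polynomial is `≡ 1` modulo every `v ∈ S`
    have hCv : algebraMap k[X] R ((∏ w ∈ S, c w) * X) ∈ v.asIdeal :=
      map_mul (algebraMap k[X] R) _ _ ▸ Ideal.mul_mem_right _ _
        (Ideal.mem_of_dvd _ (map_dvd _ (Finset.dvd_prod_of_mem c hv)) (hcv v))
    rw [map_add, map_one, Ideal.add_mem_iff_right _ hCv] at hqv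
    exact v.isPrime.one_notMem hqv

section FunctionFieldSetting

variable (p : ℕ) [Fact p.Prime]
variable (K : Type*) [Field K] [Algebra (RatFunc (ZMod p)) K]
  [Algebra (Polynomial (ZMod p)) K]
  [IsScalarTower (Polynomial (ZMod p)) (RatFunc (ZMod p)) K]
  [FunctionField (ZMod p) K]
  [Algebra.IsSeparable (RatFunc (ZMod p)) K]

/-- The ring of integers of the function field `K`: the integral closure of
`𝔽_p[t]` in `K`. -/
noncomputable abbrev OK := FunctionField.ringOfIntegers (ZMod p) K

/-- The image in `O_K` of a polynomial over `𝔽_p`. -/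
noncomputable def polyToOK (f : Polynomial (ZMod p)) : OK p K :=
  ⟨algebraMap (Polynomial (ZMod p)) K f, isIntegral_algebraMap⟩

/-- The holomorphy ring `O_{K,S}` when `S` consists of all the infinite places
together with the finite set `Sf` of finite places: the elements of `K` integral
at every finite place outside `Sf`. -/
noncomputable abbrev holoFin (Sf : Finset (HeightOneSpectrum (OK p K))) : Subring K :=
  integralAt (fun v => v ∉ Sf)

/-- The holomorphy ring `O_{K,S}` when `S` is the complement of the finite set `T`
of finite places: the elements of `K` integral at each prime of `T`. -/
noncomputable abbrev holoCof (T : Finset (HeightOneSpectrum (OK p K))) : Subring K :=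
  integralAt (fun v => v ∈ T)

theorem polyMem_holoFin (Sf : Finset (HeightOneSpectrum (OK p K)))
    (f : Polynomial (ZMod p)) :
    algebraMap (Polynomial (ZMod p)) K f ∈ holoFin p K Sf :=
  algebraMap_mem_integralAt _ (polyToOK p K f)

/-- The image of `t` in `K`. -/
noncomputable def tK : K := algebraMap (RatFunc (ZMod p)) K RatFunc.X

theorem tK_eqPoly : tK p K = algebraMap (Polynomial (ZMod p)) K Polynomial.X := by
  rw [IsScalarTower.algebraMap_apply (Polynomial (ZMod p)) (RatFunc (ZMod p)) K,
    RatFunc.algebraMap_X]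
  rfl

theorem tK_mem (Pr : HeightOneSpectrum (OK p K) → Prop) :
    tK p K ∈ (integralAt Pr : Subring K) := by
  rw [tK_eqPoly]
  exact algebraMap_mem_integralAt _ (polyToOK p K Polynomial.X)

/-- The valuation subring at infinity of `𝔽_p(t)` (consisting of the rational
functions of degree at most `0`). -/
noncomputable def inftyVSR : ValuationSubring (RatFunc (ZMod p)) :=
  letI := Classical.decEq (RatFunc (ZMod p))
  (FunctionField.inftyValuation (ZMod p)).valuationSubring

/-- The infinite places of `K`: the valuation subrings of `K` lying above the
place at infinity of `𝔽_p(t)`. -/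
noncomputable def InfPlace : Type _ :=
  {V : ValuationSubring K // V.comap (algebraMap (RatFunc (ZMod p)) K) = inftyVSR p}

/-- The number of infinite places of `K`. -/
noncomputable def numInfPlaces : ℕ := Nat.card (InfPlace p K)

/-- The infinite places of `K` together with their normalized (surjective,
`ℤ`-valued) additive valuations: `W` enumerates, without repetition, all the
valuation subrings of `K` lying above the place at infinity of `𝔽_p(t)`, and
`ord i` is the corresponding normalized additive valuation. -/
structure InfData where
  /-- the number `s_∞` of infinite places -/
  s : ℕ
  pos : 0 < s
  /-- the valuation subrings at the infinite places -/
  W : Fin s → ValuationSubring K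
  inj : Function.Injective W
  above : ∀ i, (W i).comap (algebraMap (RatFunc (ZMod p)) K) = inftyVSR p
  complete : ∀ V : ValuationSubring K,
    V.comap (algebraMap (RatFunc (ZMod p)) K) = inftyVSR p → ∃ i, V = W i
  /-- the normalized additive valuations `ord_{∞_i}` -/
  ord : Fin s → K → ℤ
  ord_mul : ∀ i (x y : K), x ≠ 0 → y ≠ 0 → ord i (x * y) = ord i x + ord i y
  ord_add : ∀ i (x y : K), x ≠ 0 → y ≠ 0 → x + y ≠ 0 →
    min (ord i x) (ord i y) ≤ ord i (x + y)
  ord_surj : ∀ i (n : ℤ), ∃ x : K, x ≠ 0 ∧ ord i x = n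
  mem_iff : ∀ i (x : K), x ≠ 0 → (x ∈ W i ↔ 0 ≤ ord i x)

/-- `ord_min(x) = min {ord_{∞_i}(x) : i = 1, …, s_∞}`. -/
noncomputable def ordMin (I : InfData p K) (x : K) : ℤ :=
  haveI : Nonempty (Fin I.s) := Fin.pos_iff_nonempty.mp I.pos
  Finset.univ.inf' Finset.univ_nonempty (fun i => I.ord i x)


/-- The ideal class number `h_K` of `O_K`. -/
noncomputable def classNum : ℕ := Nat.card (ClassGroup (OK p K))


namespace InfData

variable {p K}

theorem ord_one (I : InfData p K) (i : Fin I.s) : I.ord i 1 = 0 := by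
  have h := I.ord_mul i 1 1 one_ne_zero one_ne_zero
  rw [mul_one] at h
  omega

theorem ord_pow (I : InfData p K) (i : Fin I.s) {x : K} (hx : x ≠ 0) (n : ℕ) :
    I.ord i (x ^ n) = n * I.ord i x := by
  induction n with
  | zero => simp [I.ord_one]
  | succ n ih =>
    rw [pow_succ, I.ord_mul i _ _ (pow_ne_zero n hx) hx, ih]
    push_cast
    ring

theorem ord_prod_pow_nonpos {ι : Type*} (I : InfData p K) (i : Fin I.s) (s : Finset ι)
    {f : ι → K} (hf0 : ∀ j ∈ s, f j ≠ 0) (hf : ∀ j ∈ s, I.ord i (f j) ≤ 0) (k : ι → ℕ) :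
    I.ord i (∏ j ∈ s, f j ^ k j) ≤ 0 := by
  classical
  induction s using Finset.induction_on with
  | empty => simp [I.ord_one]
  | insert a s ha ih =>
    have hfa := hf0 a (s.mem_insert_self a)
    rw [Finset.prod_insert ha, I.ord_mul i _ _ (pow_ne_zero _ hfa)
      (Finset.prod_ne_zero_iff.mpr fun j hj => pow_ne_zero _ (hf0 j (Finset.mem_insert_of_mem hj))),
      I.ord_pow i hfa]
    have hmul := mul_nonpos_of_nonneg_of_nonpos (k a).cast_nonneg (hf a (s.mem_insert_self a))
    linarith [ih (fun j hj => hf0 j (Finset.mem_insert_of_mem hj))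
      fun j hj => hf j (Finset.mem_insert_of_mem hj)]

theorem ord_algebraMap_le_neg_one (I : InfData p K) (i : Fin I.s) {q : (ZMod p)[X]}
    (hq : 0 < q.natDegree) : I.ord i (algebraMap (ZMod p)[X] K q) ≤ -1 := by
  classical
  have hq0 : q ≠ 0 := ne_zero_of_natDegree_gt hq
  have hqK0 : algebraMap (ZMod p)[X] K q ≠ 0 := by
    rw [IsScalarTower.algebraMap_apply (ZMod p)[X] (RatFunc (ZMod p)) K]
    exact (_root_.map_ne_zero _).mpr ((map_ne_zero_iff _ (IsFractionRing.injective _ _)).mpr hq0)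
  by_contra! hpos
  -- otherwise `q` would lie in the valuation ring at infinity of `𝔽_p(t)`
  have hmem : algebraMap (ZMod p)[X] (RatFunc (ZMod p)) q ∈ inftyVSR p := by
    rw [← I.above i, ValuationSubring.mem_comap, ← IsScalarTower.algebraMap_apply]
    exact (I.mem_iff i _ hqK0).mpr (by omega)
  change RatFunc.inftyValuationDef (ZMod p) _ ≤ 1 at hmem
  rw [RatFunc.inftyValuation.polynomial (F := ZMod p) hq0, ← WithZero.exp_zero,
    WithZero.exp_le_exp] at hmem
  omega

theorem exists_ord_mul_pow_nonpos (I : InfData p K) {y z : K} (hy : y ≠ 0) (hz : z ≠ 0)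
    (hz1 : ∀ i, I.ord i z ≤ -1) : ∃ N : ℕ, ∀ i, I.ord i (y * z ^ N) ≤ 0 := by
  obtain ⟨M, hM⟩ := Finite.exists_le fun i => I.ord i y
  refine ⟨M.toNat, fun i => ?_⟩
  rw [I.ord_mul i _ _ hy (pow_ne_zero _ hz), I.ord_pow i hz]
  nlinarith [hM i, hz1 i, Int.self_le_toNat M, (M.toNat).cast_nonneg (α := ℤ)]

end InfData

theorem exists_ordAt_eq_classNum_and_ord_nonpos (Sf : Finset (HeightOneSpectrum (OK p K)))
    (I : InfData p K) (𝔭 : HeightOneSpectrum (OK p K)) :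
    ∃ τ : OK p K, τ ≠ 0 ∧ ordAt 𝔭 (algebraMap (OK p K) K τ) = classNum p K ∧
      (∀ 𝔮 ∈ Sf, 𝔮 ≠ 𝔭 → ordAt 𝔮 (algebraMap (OK p K) K τ) = 0) ∧
      ∀ i, I.ord i (algebraMap (OK p K) K τ) ≤ 0 := by
  classical
  obtain ⟨q, hq, hqS⟩ := exists_natDegree_pos_forall_notMem (k := ZMod p) (insert 𝔭 Sf)
  obtain ⟨π, hπ⟩ := exists_span_singleton_eq_pow_card_classGroup 𝔭
  set qO := algebraMap (ZMod p)[X] (OK p K) q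
  have hqO0 : qO ≠ 0 := fun h0 => hqS 𝔭 (Finset.mem_insert_self 𝔭 Sf) (h0 ▸ Ideal.zero_mem _)
  have hπ0 := ne_zero_of_span_eq_pow hπ
  have hinj := IsFractionRing.injective (OK p K) K
  have hqinf (i : Fin I.s) : I.ord i (algebraMap (OK p K) K qO) ≤ -1 := by
    rw [← IsScalarTower.algebraMap_apply]
    exact I.ord_algebraMap_le_neg_one i hq
  obtain ⟨N, hN⟩ := I.exists_ord_mul_pow_nonpos ((map_ne_zero_iff _ hinj).mpr hπ0)
    ((map_ne_zero_iff _ hinj).mpr hqO0) hqinf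
  have hord (v : HeightOneSpectrum (OK p K)) (hv : v ∈ insert 𝔭 Sf) :
      ordAt v (algebraMap (OK p K) K (π * qO ^ N)) = ordAt v (algebraMap (OK p K) K π) := by
    rw [map_mul, map_pow, ordAt_mul v ((map_ne_zero_iff _ hinj).mpr hπ0)
      (pow_ne_zero _ ((map_ne_zero_iff _ hinj).mpr hqO0)), ordAt_pow,
      ordAt_algebraMap_of_notMem v (hqS v hv), mul_zero, add_zero]
  refine ⟨π * qO ^ N, mul_ne_zero hπ0 (pow_ne_zero N hqO0), ?_, fun 𝔮 h𝔮 h𝔮𝔭 => ?_, ?_⟩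
  · rw [hord 𝔭 (Finset.mem_insert_self 𝔭 Sf), ordAt_algebraMap_of_span_eq_pow 𝔭 hπ, classNum]
  · rw [hord 𝔮 (Finset.mem_insert_of_mem h𝔮),
      ordAt_algebraMap_of_notMem 𝔮 (notMem_of_span_eq_pow h𝔮𝔭 hπ)]
  · simpa only [map_mul, map_pow] using hN

theorem exists_good_fraction
    (Sf : Finset (HeightOneSpectrum (OK p K))) (I : InfData p K) :
    ∃ C₁ : ℕ, ∀ x : K, x ∈ holoFin p K Sf → x ≠ 0 →
      ∃ a b : K, a ∈ holoFin p K Sf ∧ a ≠ 0 ∧ b ∈ OK p K ∧ b ≠ 0 ∧ x = a / b ∧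
        (∀ 𝔭 ∈ Sf, -(classNum p K : ℤ) ≤ ordAt 𝔭 a) ∧
        (∀ i : Fin I.s, I.ord i b ≤ (C₁ : ℤ)) ∧
        (∀ 𝔭 ∈ Sf, 0 < ordAt 𝔭 a → ordAt 𝔭 b = 0) := by
  have hh : 0 < classNum p K := Nat.card_pos (α := ClassGroup (OK p K))
  have hinj := IsFractionRing.injective (OK p K) K
  choose τ hτ0 hτself hτother hτinf using exists_ordAt_eq_classNum_and_ord_nonpos p K Sf I
  refine ⟨0, fun x hx hx0 => ?_⟩
  choose k hk_ge hk_zero using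
    fun 𝔭 : HeightOneSpectrum (OK p K) =>
      exists_nat_neg_le_add_mul_and_eq_zero_of_pos (ordAt 𝔭 x) hh
  set b := algebraMap (OK p K) K (∏ 𝔭 ∈ Sf, τ 𝔭 ^ k 𝔭)
  have hb0 : b ≠ 0 := (map_ne_zero_iff _ hinj).mpr
    (Finset.prod_ne_zero_iff.mpr fun 𝔭 _ => pow_ne_zero _ (hτ0 𝔭))
  have hb (𝔭) (h𝔭 : 𝔭 ∈ Sf) : ordAt 𝔭 b = k 𝔭 * classNum p K :=
    ordAt_prod_pow (fun 𝔭 _ => hτ0 𝔭) (fun 𝔭 _ => hτself 𝔭) (fun 𝔭 _ => hτother 𝔭) k h𝔭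
  have hab (𝔭) (h𝔭 : 𝔭 ∈ Sf) : ordAt 𝔭 (x * b) = ordAt 𝔭 x + k 𝔭 * classNum p K := by
    rw [ordAt_mul 𝔭 hx0 hb0, hb 𝔭 h𝔭]
  refine ⟨x * b, b, mul_mem hx (algebraMap_mem_integralAt _ _), mul_ne_zero hx0 hb0,
    SetLike.coe_mem _, hb0, (mul_div_cancel_right₀ x hb0).symm,
    fun 𝔭 h𝔭 => hab 𝔭 h𝔭 ▸ hk_ge 𝔭, fun i => ?_, fun 𝔭 h𝔭 hpos => ?_⟩
  · simpa only [b, map_prod, map_pow, Nat.cast_zero] using I.ord_prod_pow_nonpos i Sf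
      (fun 𝔭 _ => (map_ne_zero_iff _ hinj).mpr (hτ0 𝔭)) (fun 𝔭 _ => hτinf 𝔭 i) k
  · rw [hb 𝔭 h𝔭, hk_zero 𝔭 (hab 𝔭 h𝔭 ▸ hpos), Nat.cast_zero, zero_mul]
end FunctionFieldSetting


end Paper
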